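/- arXiv:2401.16636 — 2 statements merged into one kernel-verified Lean document; each statement's English description precedes it below -/
import Mathlib

section
/- For every element g of PSL(2,ℤ) acting on ℍ, every t > 0, and every rational cusp r ∈ ℚ ∪ {∞} with g(r) = r', the image g(B_t(r)) equals B_t(r'), where B_t(p/q) = H_{t/q²}(p/q) for p/q in lowest terms and B_t(∞) = {τ : Im τ > 1/t}. -/
/-!
Writing `g τ = (aτ + b)/(cτ + d)`, the determinant condition gives the two identities
`Im (g τ) = Im τ / |cτ + d|²` and `(cp + dq) g τ - (ap + bq) = (qτ - p)/(cτ + d)`.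
Dividing the first by the square of the norm of the second, the factor `|cτ + d|²` cancels:
the quantity `Im τ / |qτ - p|²` defining `B_t(p/q)` is invariant when `τ` and the cusp
`(p, q)` are moved together by `g`. Hence `g` maps `B_t(p/q)` into `B_t(g(p/q))`, and the
inverse matrix maps it back.
-/

open Complex Set

/-- The normalized horoball `B_t(p/q)` based at the cusp `p/q` (with `(p,q) = (1,0)`
representing `∞`): note `Im τ / |qτ - p|² > 1/t` gives `H_{t/q²}(p/q)` for `q > 0`
and the half-plane `{Im τ > 1/t}` for `(p,q) = (±1,0)`. -/
def cuspHoroball (t : ℝ) (p q : ℤ) : Set ℂ :=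
  {τ : ℂ | 0 < τ.im ∧ τ.im / ‖(q : ℂ) * τ - (p : ℂ)‖^2 > 1 / t}

noncomputable def mobius (a b c d : ℤ) (τ : ℂ) : ℂ := (a * τ + b) / (c * τ + d)

section Mobius

variable {a b c d : ℤ}

lemma mobius_denom_ne_zero (hdet : a * d - b * c = 1) {τ : ℂ} (hτ : 0 < τ.im) :
    (c : ℂ) * τ + d ≠ 0 := by
  intro h
  have hc : c = 0 := by
    have him := congrArg Complex.im h
    simp only [add_im, mul_im, intCast_re, intCast_im, zero_mul, add_zero, zero_im,
      mul_eq_zero, Int.cast_eq_zero] at him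
    exact him.resolve_right hτ.ne'
  have hd : d = 0 := by
    have hre := congrArg Complex.re h
    simp [hc] at hre
    exact hre
  simp [hc, hd] at hdet

lemma im_mobius (hdet : a * d - b * c = 1) (τ : ℂ) :
    (mobius a b c d τ).im = τ.im / normSq ((c : ℂ) * τ + d) := by
  have hdetR : (a : ℝ) * d - b * c = 1 := by exact_mod_cast hdet
  rw [mobius, div_im]
  simp only [add_im, add_re, mul_im, mul_re, intCast_im, intCast_re]
  rw [← sub_div]
  congr 1
  linear_combination τ.im * hdetR

lemma cusp_mul_mobius_sub (hdet : a * d - b * c = 1) (p q : ℤ) {τ : ℂ}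
    (hτ : (c : ℂ) * τ + d ≠ 0) :
    ((c * p + d * q : ℤ) : ℂ) * mobius a b c d τ - ((a * p + b * q : ℤ) : ℂ) =
      ((q : ℂ) * τ - p) / ((c : ℂ) * τ + d) := by
  have hdetC : (a : ℂ) * d - b * c = 1 := by exact_mod_cast hdet
  rw [mobius, eq_div_iff hτ]
  push_cast
  field_simp
  linear_combination ((q : ℂ) * τ - p) * hdetC

lemma mapsTo_mobius_cuspHoroball (hdet : a * d - b * c = 1) (t : ℝ) (p q : ℤ) :
    MapsTo (mobius a b c d) (cuspHoroball t p q)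
      (cuspHoroball t (a * p + b * q) (c * p + d * q)) := by
  rintro τ ⟨hτ, hball⟩
  have hD := mobius_denom_ne_zero hdet hτ
  have hnormSq : 0 < normSq ((c : ℂ) * τ + d) := normSq_pos.2 hD
  refine ⟨by rw [im_mobius hdet]; positivity, ?_⟩
  rwa [im_mobius hdet, cusp_mul_mobius_sub hdet p q hD, norm_div, div_pow,
    Complex.sq_norm ((c : ℂ) * τ + d), div_div_div_cancel_right₀ hnormSq.ne']

lemma det_mobius_inv (hdet : a * d - b * c = 1) : d * a - (-b) * (-c) = 1 := by
  linear_combination hdet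

lemma mobius_mobius_inv (hdet : a * d - b * c = 1) {σ : ℂ} (hσ : 0 < σ.im) :
    mobius a b c d (mobius d (-b) (-c) a σ) = σ := by
  have hdetC : (a : ℂ) * d - b * c = 1 := by exact_mod_cast hdet
  have hD : ((-c : ℤ) : ℂ) * σ + a ≠ 0 := mobius_denom_ne_zero (det_mobius_inv hdet) hσ
  push_cast at hD
  have hnum : (a : ℂ) * mobius d (-b) (-c) a σ + b = σ / (-c * σ + a) := by
    rw [mobius]
    push_cast
    rw [mul_div_assoc', div_add' _ _ _ hD, div_eq_div_iff hD hD]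
    linear_combination σ * (-c * σ + a) * hdetC
  have hden : (c : ℂ) * mobius d (-b) (-c) a σ + d = 1 / (-c * σ + a) := by
    rw [mobius]
    push_cast
    rw [mul_div_assoc', div_add' _ _ _ hD, div_eq_div_iff hD hD]
    linear_combination (-c * σ + a) * hdetC
  rw [mobius, hnum, hden, div_div_div_cancel_right₀ hD, div_one]

end Mobius

theorem stmt_5_general (a b c d : ℤ) (hdet : a * d - b * c = 1) (t : ℝ)
    (p q : ℤ) :
    (fun τ : ℂ => ((a : ℂ) * τ + b) / ((c : ℂ) * τ + d)) '' cuspHoroball t p q =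
      cuspHoroball t (a * p + b * q) (c * p + d * q) := by
  change mobius a b c d '' _ = _
  refine (mapsTo_mobius_cuspHoroball hdet t p q).image_subset.antisymm fun σ hσ => ?_
  have hinv := mapsTo_mobius_cuspHoroball (det_mobius_inv hdet) t (a * p + b * q)
    (c * p + d * q) hσ
  rw [show d * (a * p + b * q) + -b * (c * p + d * q) = p by linear_combination p * hdet,
    show -c * (a * p + b * q) + a * (c * p + d * q) = q by linear_combination q * hdet] at hinv
  exact ⟨_, hinv, mobius_mobius_inv hdet hσ.1⟩

/-- An element of PSL(2,ℤ) sends `B_t(r)` onto `B_t(r')` where `r' = g(r)`: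
for `g = [[a,b],[c,d]]` and `r = p/q` in lowest terms, `g(r) = (ap+bq)/(cp+dq)`. -/
theorem stmt_5 (a b c d : ℤ) (hdet : a * d - b * c = 1) (t : ℝ) (ht : 0 < t)
    (p q : ℤ) (hq : 0 < q ∨ (p = 1 ∧ q = 0)) (hpq : IsCoprime p q) :
    (fun τ : ℂ => ((a : ℂ) * τ + b) / ((c : ℂ) * τ + d)) '' cuspHoroball t p q =
      cuspHoroball t (a * p + b * q) (c * p + d * q) :=
  stmt_5_general a b c d hdet t p q
end

section
/- Any pairwise disjoint collection of nonempty open horoballs in the hyperbolic plane is locally finite: every compact subset of the hyperbolic plane meets only finitely many of them. -/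
/-!
A compact subset of the disk lies in a smaller disk `ball 0 r` with `r < 1`. A horoball of
Euclidean radius `ρ` has its center at distance `1 - ρ` from the origin, so it can only reach
`ball 0 r` if `ρ > (1 - r) / 2`. Disjoint horoballs of radius at least `(1 - r) / 2` have centers
`1 - r` apart, and the closed unit disk contains only finitely many such points.
-/

open Metric Set

theorem TotallyBounded.finite_of_pairwise_le_dist {X ι : Type*} [PseudoMetricSpace X]
    {s : Set X} (hs : TotallyBounded s) {δ : ℝ} (hδ : 0 < δ) {f : ι → X} {S : Set ι}
    (hfS : MapsTo f S s) (hsep : S.Pairwise fun i j => δ ≤ dist (f i) (f j)) : S.Finite := by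
  rcases S.eq_empty_or_nonempty with rfl | ⟨i₀, -⟩
  · exact finite_empty
  have : Nonempty X := ⟨f i₀⟩ -- lets `choose!` return a non-dependent function
  obtain ⟨t, ht, hst⟩ := totallyBounded_iff.mp hs (δ / 2) (half_pos hδ)
  have hnear : ∀ i ∈ S, ∃ y ∈ t, f i ∈ ball y (δ / 2) := fun i hi => by
    simpa using hst (hfS hi)
  choose! g hgt hg using hnear
  have hinj : InjOn g S := by
    intro i hi j hj hij
    by_contra hne
    have hfi := mem_ball.mp (hg i hi)
    have hfj := mem_ball.mp (hg j hj)
    rw [← hij] at hfj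
    linarith [hsep hi hj hne, dist_triangle_right (f i) (f j) (g i)]
  exact (ht.subset (mapsTo_iff_image_subset.mp hgt)).of_finite_image hinj

theorem one_sub_div_two_lt_radius {E : Type*} [SeminormedAddCommGroup E] {c : E} {ρ r : ℝ}
    (htangent : ‖c‖ + ρ = 1) (hmeet : (ball c ρ ∩ ball 0 r).Nonempty) : (1 - r) / 2 < ρ := by
  obtain ⟨x, hxc, hx0⟩ := hmeet
  rw [mem_ball, dist_eq_norm] at hxc
  rw [mem_ball_zero_iff] at hx0
  have hc := norm_le_norm_add_norm_sub' c x
  rw [norm_sub_rev] at hc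
  linarith

theorem finite_setOf_tangent_ball_inter_ball_nonempty {E ι : Type*} [NormedAddCommGroup E]
    [NormedSpace ℝ E] [ProperSpace E] {c : ι → E} {ρ : ι → ℝ} (hρ : ∀ i, 0 < ρ i)
    (htangent : ∀ i, ‖c i‖ + ρ i = 1)
    (hdisj : Pairwise fun i j => Disjoint (ball (c i) (ρ i)) (ball (c j) (ρ j)))
    {r : ℝ} (hr : r < 1) : {i | (ball (c i) (ρ i) ∩ ball 0 r).Nonempty}.Finite := by
  refine (isCompact_closedBall (0 : E) 1).totallyBounded.finite_of_pairwise_le_dist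
    (δ := 1 - r) (f := c) (by linarith) (fun i _ => ?_) fun i hi j hj hij => ?_
  · rw [mem_closedBall_zero_iff]
    linarith [htangent i, hρ i]
  · have := (disjoint_ball_ball_iff (hρ i) (hρ j)).mp (hdisj hij)
    have := one_sub_div_two_lt_radius (htangent i) hi
    have := one_sub_div_two_lt_radius (htangent j) hj
    linarith

/-- A pairwise disjoint family of nonempty open horoballs in the Poincaré disk
(open Euclidean disks internally tangent to the unit circle) is locally finite:
every compact subset of the disk meets only finitely many of them. -/
theorem stmt_7 {ι : Type*} (c : ι → ℂ) (ρ : ι → ℝ)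
    (hρ : ∀ i, 0 < ρ i) (htangent : ∀ i, ‖c i‖ + ρ i = 1)
    (hdisj : Pairwise fun i j => Disjoint (Metric.ball (c i) (ρ i)) (Metric.ball (c j) (ρ j)))
    (K : Set ℂ) (hK : IsCompact K) (hKD : K ⊆ Metric.ball (0 : ℂ) 1) :
    {i : ι | (Metric.ball (c i) (ρ i) ∩ K).Nonempty}.Finite := by
  obtain ⟨r, hr, hKr⟩ := exists_lt_subset_ball hK.isClosed hKD
  exact (finite_setOf_tangent_ball_inter_ball_nonempty hρ htangent hdisj hr).subset
    fun i ⟨x, hxc, hxK⟩ => ⟨x, hxc, hKr hxK⟩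
end
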